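/- Let H be a finite-dimensional complex inner product space, ψ ∈ H, P₁, ..., P_L orthogonal projections on H, and c > 0. Then ‖ψ‖² − ‖P_L P_{L-1} ⋯ P₁ ψ‖² ≤ (1 + c)·‖(I − P_L) ψ‖² + (2 + c + c⁻¹)·∑_{i=2}^{L-1} ‖(I − P_i) ψ‖² + (2 + c⁻¹)·‖(I − P₁) ψ‖². -/

import Mathlib

/-!
Write `φₖ = Pₖ ⋯ P₁ ψ` and track the potential `Φ(φ) = ‖ψ‖² - ‖φ‖² + (1 + c⁻¹) ‖ψ - φ‖²`.
We have `Φ(P₁ ψ) = (2 + c⁻¹) ‖(1 - P₁) ψ‖²`, and one more projection `P` raises `Φ` by at most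
`(2 + c + c⁻¹) ‖(1 - P) ψ‖²`: by Pythagoras the increase is
`2 (1 + c⁻¹) Re ⟪(1 - P) ψ, (1 - P) φ⟫ - c⁻¹ ‖(1 - P) φ‖²`, and Cauchy–Schwarz followed by AM–GM
with weight `c⁻¹` bounds the inner product term by `c⁻¹ ‖(1 - P) φ‖² + (2 + c + c⁻¹) ‖(1 - P) ψ‖²`.
The last projection is handled differently: the loss `‖φ‖² - ‖P_L φ‖² = ‖(1 - P_L) φ‖²` is at most
`(‖(1 - P_L) ψ‖ + ‖ψ - φ‖)²`, and `(a + b)² ≤ (1 + c) a² + (1 + c⁻¹) b²` leaves exactly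
`Φ(φ) + (1 + c) ‖(1 - P_L) ψ‖²`.
-/

open scoped InnerProductSpace

/-- `descComp P k = P k ∘ P (k-1) ∘ ⋯ ∘ P 1`, empty composition is the identity. -/
def descComp {H : Type*} [AddCommGroup H] [Module ℂ H]
    (P : ℕ → (H →ₗ[ℂ] H)) : ℕ → (H →ₗ[ℂ] H)
  | 0 => 1
  | k + 1 => P (k + 1) ∘ₗ descComp P k

namespace LinearMap.IsSymmetricProjection

variable {𝕜 E : Type*} [RCLike 𝕜] [SeminormedAddCommGroup E] [InnerProductSpace 𝕜 E]
  {Q : E →ₗ[𝕜] E}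

theorem one_sub (hQ : Q.IsSymmetricProjection) : (1 - Q).IsSymmetricProjection :=
  ⟨hQ.isIdempotentElem.one_sub, LinearMap.IsSymmetric.id.sub hQ.isSymmetric⟩

theorem inner_apply_apply (hQ : Q.IsSymmetricProjection) (v w : E) :
    ⟪Q v, Q w⟫_𝕜 = ⟪v, Q w⟫_𝕜 := by
  rw [hQ.isSymmetric, ← Module.End.mul_apply, hQ.isIdempotentElem.eq]

theorem norm_sq_eq_norm_apply_sq_add (hQ : Q.IsSymmetricProjection) (v : E) :
    ‖v‖ ^ 2 = ‖Q v‖ ^ 2 + ‖(1 - Q) v‖ ^ 2 := by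
  have horth : ⟪Q v, (1 - Q) v⟫_𝕜 = 0 := by
    rw [hQ.isSymmetric, ← Module.End.mul_apply, hQ.isIdempotentElem.mul_one_sub_self,
      LinearMap.zero_apply, inner_zero_right]
  have := norm_add_sq_eq_norm_sq_add_norm_sq_of_inner_eq_zero _ _ horth
  rw [show Q v + (1 - Q) v = v by simp] at this
  simpa only [sq] using this

theorem norm_apply_le (hQ : Q.IsSymmetricProjection) (v : E) : ‖Q v‖ ≤ ‖v‖ := by
  refine le_of_sq_le_sq ?_ (norm_nonneg _)
  rw [hQ.norm_sq_eq_norm_apply_sq_add v]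
  exact le_add_of_nonneg_right (sq_nonneg _)

theorem norm_sub_apply_sq_add (hQ : Q.IsSymmetricProjection) (ψ φ : E) :
    ‖ψ - Q φ‖ ^ 2 + ‖(1 - Q) φ‖ ^ 2
      = ‖ψ - φ‖ ^ 2 + 2 * RCLike.re ⟪(1 - Q) ψ, (1 - Q) φ⟫_𝕜 := by
  have hsplit : ψ - Q φ = (ψ - φ) + (1 - Q) φ := by simp
  have hcross : ⟪ψ - φ, (1 - Q) φ⟫_𝕜 = ⟪(1 - Q) ψ, (1 - Q) φ⟫_𝕜 - ⟪(1 - Q) φ, (1 - Q) φ⟫_𝕜 := by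
    rw [← hQ.one_sub.inner_apply_apply, map_sub, inner_sub_left]
  rw [hsplit, norm_add_sq (𝕜 := 𝕜), hcross, map_sub, inner_self_eq_norm_sq]
  ring

end LinearMap.IsSymmetricProjection

section Potential

variable {E : Type*} [SeminormedAddCommGroup E] {c : ℝ}

noncomputable def projectionPotential (c : ℝ) (ψ φ : E) : ℝ :=
  ‖ψ‖ ^ 2 - ‖φ‖ ^ 2 + (1 + c⁻¹) * ‖ψ - φ‖ ^ 2

theorem projectionPotential_self (ψ : E) : projectionPotential c ψ ψ = 0 := by
  simp [projectionPotential]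

variable {𝕜 : Type*} [RCLike 𝕜] [InnerProductSpace 𝕜 E] {Q : E →ₗ[𝕜] E}

theorem projectionPotential_apply_self (hQ : Q.IsSymmetricProjection) (ψ : E) :
    projectionPotential c ψ (Q ψ) = (2 + c⁻¹) * ‖(1 - Q) ψ‖ ^ 2 := by
  have hpyth := hQ.norm_sq_eq_norm_apply_sq_add ψ
  have hsub : ψ - Q ψ = (1 - Q) ψ := by simp
  rw [projectionPotential, hsub]
  linarith

theorem projectionPotential_apply_le (hQ : Q.IsSymmetricProjection) (hc : 0 < c) (ψ φ : E) :
    projectionPotential c ψ (Q φ)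
      ≤ projectionPotential c ψ φ + (2 + c + c⁻¹) * ‖(1 - Q) ψ‖ ^ 2 := by
  have hpyth := hQ.norm_sq_eq_norm_apply_sq_add φ
  have hstep := hQ.norm_sub_apply_sq_add ψ φ
  have hcross : 2 * (1 + c⁻¹) * RCLike.re ⟪(1 - Q) ψ, (1 - Q) φ⟫_𝕜
      ≤ c⁻¹ * ‖(1 - Q) φ‖ ^ 2 + (2 + c + c⁻¹) * ‖(1 - Q) ψ‖ ^ 2 := calc
    _ ≤ 2 * ‖(1 - Q) φ‖ * ((1 + c⁻¹) * ‖(1 - Q) ψ‖) := by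
      have := mul_le_mul_of_nonneg_left (re_inner_le_norm (𝕜 := 𝕜) ((1 - Q) ψ) ((1 - Q) φ))
        (by positivity : (0 : ℝ) ≤ 2 * (1 + c⁻¹))
      linarith
    _ ≤ c⁻¹ * ‖(1 - Q) φ‖ ^ 2 + c⁻¹⁻¹ * ((1 + c⁻¹) * ‖(1 - Q) ψ‖) ^ 2 :=
      two_mul_le_add_mul_sq (inv_pos.mpr hc)
    _ = c⁻¹ * ‖(1 - Q) φ‖ ^ 2 + (2 + c + c⁻¹) * ‖(1 - Q) ψ‖ ^ 2 := by
      field_simp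
      ring
  unfold projectionPotential
  linear_combination hpyth + (1 + c⁻¹) * hstep + hcross

theorem norm_sq_sub_norm_apply_sq_le (hQ : Q.IsSymmetricProjection) (hc : 0 < c) (ψ φ : E) :
    ‖ψ‖ ^ 2 - ‖Q φ‖ ^ 2 ≤ projectionPotential c ψ φ + (1 + c) * ‖(1 - Q) ψ‖ ^ 2 := by
  have hpyth := hQ.norm_sq_eq_norm_apply_sq_add φ
  have htri : ‖(1 - Q) φ‖ ≤ ‖(1 - Q) ψ‖ + ‖ψ - φ‖ := calc
    ‖(1 - Q) φ‖ = ‖(1 - Q) ψ - (1 - Q) (ψ - φ)‖ := by rw [← map_sub, sub_sub_cancel]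
    _ ≤ ‖(1 - Q) ψ‖ + ‖(1 - Q) (ψ - φ)‖ := norm_sub_le _ _
    _ ≤ ‖(1 - Q) ψ‖ + ‖ψ - φ‖ := by gcongr; exact hQ.one_sub.norm_apply_le _
  have hsq := pow_le_pow_left₀ (norm_nonneg _) htri 2
  have hamgm := two_mul_le_add_mul_sq (a := ‖(1 - Q) ψ‖) (b := ‖ψ - φ‖) hc
  unfold projectionPotential
  linear_combination hpyth + hsq + hamgm

end Potential

theorem projectionPotential_descComp_le {H : Type*} [SeminormedAddCommGroup H]
    [InnerProductSpace ℂ H] {P : ℕ → H →ₗ[ℂ] H} {m : ℕ}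
    (hP : ∀ i ∈ Finset.Icc 1 m, (P i).IsSymmetricProjection) {c : ℝ} (hc : 0 < c) (ψ : H) :
    projectionPotential c ψ (descComp P m ψ)
      ≤ (2 + c + c⁻¹) * ∑ i ∈ Finset.Icc 2 m, ‖(1 - P i) ψ‖ ^ 2
        + (2 + c⁻¹) * ‖(1 - P 1) ψ‖ ^ 2 := by
  induction m with
  | zero =>
    rw [descComp, Module.End.one_apply, projectionPotential_self]
    positivity
  | succ m ih =>
    rcases Nat.eq_zero_or_pos m with rfl | hm
    · simp [descComp, projectionPotential_apply_self (hP 1 (by simp))]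
    · have hQ := hP (m + 1) (by simp)
      have ih := ih fun i hi ↦ hP i (Finset.Icc_subset_Icc_right m.le_succ hi)
      rw [Finset.sum_Icc_succ_top (by omega)]
      calc projectionPotential c ψ (descComp P (m + 1) ψ)
          ≤ projectionPotential c ψ (descComp P m ψ) + (2 + c + c⁻¹) * ‖(1 - P (m + 1)) ψ‖ ^ 2 :=
            projectionPotential_apply_le hQ hc ψ _
        _ ≤ _ := by linarith

theorem stmt4 {H : Type*} [NormedAddCommGroup H] [InnerProductSpace ℂ H]
    (L : ℕ) (P : ℕ → (H →ₗ[ℂ] H))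
    (hsym : ∀ i ∈ Finset.Icc 1 L, (P i).IsSymmetric)
    (hidem : ∀ i ∈ Finset.Icc 1 L, P i ∘ₗ P i = P i)
    (ψ : H) (c : ℝ) (hc : 0 < c) :
    ‖ψ‖ ^ 2 - ‖descComp P L ψ‖ ^ 2
      ≤ (1 + c) * ‖(1 - P L) ψ‖ ^ 2
        + (2 + c + c⁻¹) * ∑ i ∈ Finset.Icc 2 (L - 1), ‖(1 - P i) ψ‖ ^ 2
        + (2 + c⁻¹) * ‖(1 - P 1) ψ‖ ^ 2 := by
  have hP : ∀ i ∈ Finset.Icc 1 L, (P i).IsSymmetricProjection :=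
    fun i hi ↦ ⟨hidem i hi, hsym i hi⟩
  rcases L with _ | m
  · simp only [descComp, Module.End.one_apply, sub_self]
    positivity
  have hlast := norm_sq_sub_norm_apply_sq_le (hP (m + 1) (by simp)) hc ψ (descComp P m ψ)
  have hfirst := projectionPotential_descComp_le
    (fun i hi ↦ hP i (Finset.Icc_subset_Icc_right m.le_succ hi)) hc ψ
  rw [Nat.add_sub_cancel]
  exact hlast.trans (by linarith)
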